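/- Let 𝔠 = {C_1,...,C_K} be a collection of pairwise disjoint elements of Φ(B) for an (m,n,X,δ) BNSI problem. Then N_{q,opt} ≤ n − K. Moreover, if there exist indices i_1 ∈ C_1, ..., i_K ∈ C_K such that the subproblem induced by [n] \ {i_1,...,i_K} has empty Φ, then N_{q,opt} = n − K. -/

import Mathlib

open Matrix

/-- Hamming weight of `z` restricted to the coordinates in `S`. -/
def wtOn {ι F : Type*} [Zero F] [DecidableEq F] (S : Finset ι) (z : ι → F) : ℕ :=
  (S.filter fun j => z j ≠ 0).card

/-- Hamming weight of a vector. -/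
def wt {ι F : Type*} [Fintype ι] [Zero F] [DecidableEq F] (z : ι → F) : ℕ :=
  (Finset.univ.filter fun j => z j ≠ 0).card

/-- `L` is a valid encoder matrix for the BNSI problem with demand sets `X` and error
bound `δ` iff `z ⬝ᵥ L ≠ 0` for every `z` with `1 ≤ wt(z_{X i}) ≤ 2δ` for some receiver `i`. -/
def ValidEncoder {κ ι F : Type*} [Fintype ι] [Field F] [DecidableEq F] {N : ℕ}
    (X : κ → Finset ι) (δ : ℕ) (L : Matrix ι (Fin N) F) : Prop :=
  ∀ z : ι → F, (∃ i, 1 ≤ wtOn (X i) z ∧ wtOn (X i) z ≤ 2 * δ) → Matrix.vecMul z L ≠ 0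

/-- Optimal codelength of a linear coding scheme for the BNSI problem over `F`. -/
noncomputable def Nopt (F : Type*) [Field F] [DecidableEq F] {κ ι : Type*} [Fintype ι]
    (X : κ → Finset ι) (δ : ℕ) : ℕ :=
  sInf {N : ℕ | ∃ L : Matrix ι (Fin N) F, ValidEncoder X δ L}

/-- `Φ(B)`: the collection of non-empty `C ⊆ [n]` such that every demand set meets `C`
in either `0` or at least `2δ+1` elements. -/
def Phi {m n : ℕ} (X : Fin m → Finset (Fin n)) (δ : ℕ) : Set (Finset (Fin n)) :=
  {C | C.Nonempty ∧ ∀ i, (X i ∩ C).card = 0 ∨ 2 * δ + 1 ≤ (X i ∩ C).card}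

/-!
A matrix `L` is a valid encoder exactly when every nonzero `z` with `z ᵥ* L = 0` is supported
on a member of `Φ`. Since `Φ` is closed under unions, every nonzero combination of the indicator
vectors of the disjoint sets `C k` is such a `z`; these vectors span a `K`-dimensional space, and
a matrix with exactly this left kernel has `n - K` columns. Conversely, if no member of `Φ` avoids
the coordinates `idx k`, then `z ↦ (z ᵥ* L, z ∘ idx)` is injective for every valid `L`, so
`n ≤ N + K`.
-/

open Finset Module

def indicatorVec {ι : Type*} (F : Type*) [Zero F] [One F] [DecidableEq ι] (S : Finset ι) :
    ι → F :=
  fun j => if j ∈ S then 1 else 0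

section LinearAlgebra

variable {F ι : Type*} [Field F]

theorem exists_matrix_vecMul_eq_zero_iff [Fintype ι] (W : Submodule F (ι → F)) {N : ℕ}
    (hN : finrank F W + N = Fintype.card ι) :
    ∃ L : Matrix ι (Fin N) F, ∀ z, z ᵥ* L = 0 ↔ z ∈ W := by
  classical
  have hrank : finrank F ((ι → F) ⧸ W) = finrank F (Fin N → F) := by
    have := W.finrank_quotient_add_finrank
    rw [finrank_fintype_fun_eq_card] at this
    rw [finrank_fin_fun]
    omega
  let φ := (LinearEquiv.ofFinrankEq _ _ hrank).toLinearMap ∘ₗ W.mkQ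
  refine ⟨(LinearMap.toMatrix' φ)ᵀ, fun z => ?_⟩
  rw [vecMul_transpose, LinearMap.toMatrix'_mulVec, ← LinearMap.mem_ker, LinearMap.ker_comp,
    LinearEquiv.ker, Submodule.comap_bot, Submodule.ker_mkQ]

section Indicator

variable [DecidableEq ι] {κ : Type*} [Fintype κ] {C : κ → Finset ι}

theorem sum_smul_indicatorVec_apply_of_mem (hdisj : ∀ a b, a ≠ b → Disjoint (C a) (C b))
    (c : κ → F) {k : κ} {j : ι} (hj : j ∈ C k) :
    (∑ b, c b • indicatorVec F (C b)) j = c k := by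
  simp only [Finset.sum_apply, Pi.smul_apply, smul_eq_mul, indicatorVec, mul_ite, mul_one,
    mul_zero]
  rw [Finset.sum_eq_single k (fun b _ hb => if_neg fun hjb =>
    Finset.disjoint_left.1 (hdisj b k hb) hjb hj) (by simp), if_pos hj]

theorem linearIndependent_indicatorVec (hne : ∀ k, (C k).Nonempty)
    (hdisj : ∀ a b, a ≠ b → Disjoint (C a) (C b)) :
    LinearIndependent F fun k => indicatorVec F (C k) := by
  rw [Fintype.linearIndependent_iff]
  intro c hc k
  obtain ⟨j, hj⟩ := hne k
  rw [← sum_smul_indicatorVec_apply_of_mem hdisj c hj, hc, Pi.zero_apply]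

end Indicator

end LinearAlgebra

section Support

variable {F ι : Type*} [Zero F] [DecidableEq F] [Fintype ι]

def vecSupport (z : ι → F) : Finset ι := univ.filter (z · ≠ 0)

@[simp]
theorem mem_vecSupport {z : ι → F} {j : ι} : j ∈ vecSupport z ↔ z j ≠ 0 := by
  simp [vecSupport]

theorem vecSupport_nonempty {z : ι → F} : (vecSupport z).Nonempty ↔ z ≠ 0 := by
  simp [Finset.Nonempty, funext_iff]

theorem wtOn_eq_card_inter_vecSupport [DecidableEq ι] (S : Finset ι) (z : ι → F) :
    wtOn S z = (S ∩ vecSupport z).card := by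
  rw [vecSupport, Finset.inter_filter, Finset.inter_univ, wtOn]

end Support

section Phi

variable {m n : ℕ} {X : Fin m → Finset (Fin n)} {δ : ℕ}

theorem vecSupport_mem_Phi_iff {F : Type*} [Zero F] [DecidableEq F] (z : Fin n → F) :
    vecSupport z ∈ Phi X δ ↔ z ≠ 0 ∧ ∀ i, ¬(1 ≤ wtOn (X i) z ∧ wtOn (X i) z ≤ 2 * δ) := by
  simp only [Phi, Set.mem_ofPred_eq, vecSupport_nonempty, wtOn_eq_card_inter_vecSupport]
  refine and_congr_right fun _ => forall_congr' fun i => ?_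
  omega

theorem validEncoder_iff {F : Type*} [Field F] [DecidableEq F] {N : ℕ}
    (L : Matrix (Fin n) (Fin N) F) :
    ValidEncoder X δ L ↔ ∀ z, z ≠ 0 → z ᵥ* L = 0 → vecSupport z ∈ Phi X δ := by
  refine forall_congr' fun z => ?_
  by_cases hz : z = 0
  · simp [hz, wtOn]
  · simp only [vecSupport_mem_Phi_iff]
    exact ⟨fun h _ hL => ⟨hz, fun i hi => h ⟨i, hi⟩ hL⟩, fun h ⟨i, hi⟩ hL => (h hz hL).2 i hi⟩

theorem mem_Phi_of_forall_mem_subset {S : Finset (Fin n)} (hS : S.Nonempty)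
    (hcover : ∀ j ∈ S, ∃ C ∈ Phi X δ, j ∈ C ∧ C ⊆ S) : S ∈ Phi X δ := by
  refine ⟨hS, fun i => ?_⟩
  rcases (X i ∩ S).eq_empty_or_nonempty with h | ⟨j, hj⟩
  · simp [h]
  obtain ⟨hjX, hjS⟩ := Finset.mem_inter.1 hj
  obtain ⟨C, hC, hjC, hCS⟩ := hcover j hjS
  rcases hC.2 i with h | h
  · exact absurd (Finset.card_eq_zero.1 h ▸ Finset.mem_inter.2 ⟨hjX, hjC⟩) (Finset.notMem_empty j)
  · exact .inr (h.trans (Finset.card_le_card (Finset.inter_subset_inter_left hCS)))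

theorem vecSupport_mem_Phi_of_mem_span_indicatorVec {F κ : Type*} [Field F] [DecidableEq F]
    [Fintype κ] {C : κ → Finset (Fin n)} (hC : ∀ k, C k ∈ Phi X δ)
    (hdisj : ∀ a b, a ≠ b → Disjoint (C a) (C b)) {z : Fin n → F}
    (hz : z ∈ Submodule.span F (Set.range fun k => indicatorVec F (C k))) (hz0 : z ≠ 0) :
    vecSupport z ∈ Phi X δ := by
  obtain ⟨c, rfl⟩ := (Submodule.mem_span_range_iff_exists_fun F).1 hz
  refine mem_Phi_of_forall_mem_subset (vecSupport_nonempty.2 hz0) fun j hj => ?_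
  obtain ⟨k, hjk⟩ : ∃ k, j ∈ C k := by
    by_contra! hout
    simp [indicatorVec, hout] at hj
  refine ⟨C k, hC k, hjk, fun j' hj' => ?_⟩
  rw [mem_vecSupport, sum_smul_indicatorVec_apply_of_mem hdisj c hj',
    ← sum_smul_indicatorVec_apply_of_mem hdisj c hjk]
  exact mem_vecSupport.1 hj

theorem exists_validEncoder_of_pairwise_disjoint (F : Type*) [Field F] [DecidableEq F]
    {κ : Type*} [Fintype κ] {C : κ → Finset (Fin n)} (hC : ∀ k, C k ∈ Phi X δ)
    (hdisj : ∀ a b, a ≠ b → Disjoint (C a) (C b)) :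
    ∃ L : Matrix (Fin n) (Fin (n - Fintype.card κ)) F, ValidEncoder X δ L := by
  set W := Submodule.span F (Set.range fun k => indicatorVec F (C k))
  have hW : finrank F W = Fintype.card κ :=
    finrank_span_eq_card (linearIndependent_indicatorVec (fun k => (hC k).1) hdisj)
  have hle : finrank F W ≤ n := by simpa using W.finrank_le
  obtain ⟨L, hL⟩ := exists_matrix_vecMul_eq_zero_iff W (N := n - Fintype.card κ) (by simp; omega)
  exact ⟨L, (validEncoder_iff L).2 fun z hz0 hzL =>
    vecSupport_mem_Phi_of_mem_span_indicatorVec hC hdisj ((hL z).1 hzL) hz0⟩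

theorem card_le_of_validEncoder {F κ : Type*} [Field F] [DecidableEq F] [Fintype κ] {N : ℕ}
    {L : Matrix (Fin n) (Fin N) F} (hL : ValidEncoder X δ L) (idx : κ → Fin n)
    (hidx : ¬∃ C' ∈ Phi X δ, C' ⊆ univ \ univ.image idx) :
    n ≤ N + Fintype.card κ := by
  let ψ := (vecMulLinear L).prod (LinearMap.funLeft F F idx)
  have hψ : Function.Injective ψ := by
    rw [← LinearMap.ker_eq_bot, Submodule.eq_bot_iff]
    intro z hz
    by_contra hz0
    obtain ⟨hzL, hzidx⟩ := Prod.mk_eq_zero.1 (show (z ᵥ* L, z ∘ idx) = 0 from hz)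
    refine hidx ⟨vecSupport z, (validEncoder_iff L).1 hL z hz0 hzL, fun j hj => ?_⟩
    simp only [Finset.mem_sdiff, Finset.mem_univ, Finset.mem_image, true_and]
    rintro ⟨k, -, rfl⟩
    exact mem_vecSupport.1 hj (congrFun hzidx k)
  simpa [finrank_prod] using LinearMap.finrank_le_finrank_of_injective hψ

end Phi

theorem stmt17 {F : Type*} {m n : ℕ} [Field F] [DecidableEq F]
    (X : Fin m → Finset (Fin n)) (δ : ℕ)
    (K : ℕ) (C : Fin K → Finset (Fin n)) (hC : ∀ k, C k ∈ Phi X δ)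
    (hdisj : ∀ a b, a ≠ b → Disjoint (C a) (C b)) :
    Nopt F X δ ≤ n - K ∧
      ∀ idx : Fin K → Fin n, (∀ k, idx k ∈ C k) →
        (¬∃ C' ∈ Phi X δ, C' ⊆ Finset.univ \ Finset.univ.image idx) →
        Nopt F X δ = n - K := by
  obtain ⟨L, hL⟩ := exists_validEncoder_of_pairwise_disjoint F hC hdisj
  have hup : Nopt F X δ ≤ n - K := by
    rw [← Fintype.card_fin K]
    exact Nat.sInf_le ⟨L, hL⟩
  refine ⟨hup, fun idx _ hidx => hup.antisymm ?_⟩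
  obtain ⟨L', hL'⟩ :=
    Nat.sInf_mem (s := {N | ∃ L : Matrix _ (Fin N) F, ValidEncoder X δ L}) ⟨_, L, hL⟩
  have := card_le_of_validEncoder hL' idx hidx
  rw [Fintype.card_fin] at this
  unfold Nopt
  omega
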